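/- arXiv:2512.18458 — 2 statements merged into one kernel-verified Lean document; each statement's English description precedes it below -/
import Mathlib

section
/- Combining the two structural lemmas: let M = [A I] with A ∈ ℝ^{m×n} and I ∈ ℝ^{m×k} having first r rows zero and remaining rows equal to −ρΛ^{-1} (Λ invertible diagonal, ρ > 0), let W ⊆ {1,…,m} with i ∉ W, and let L (unit lower triangular), D (diagonal, nonsingular) satisfy [M]_W [M]_W^T = L D L^T. Then the LDL^T update quantities for appending row i satisfy L D l = [A]_W [A]_i^T and δ = [A]_i [A]_i^T − l^T D l + ρ²(Λ^{-2})_{kk} if i > r (with k = i − r), and δ = [A]_i [A]_i^T − l^T D l if i ≤ r. -/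
open Matrix

/-!
The rows of `B` are zero or multiples of distinct standard basis vectors, so they are pairwise
orthogonal. Hence, for `a ≠ i`, the Gram entries of `M = [A B]` and of `A` agree, while the
diagonal entry `Mᵢ ⬝ Mᵢ` exceeds `Aᵢ ⬝ Aᵢ` by `‖Bᵢ‖² = ρ² Λₖ⁻²` or by `0`.
-/

theorem fromCols_row_dotProduct {m n₁ n₂ R : Type*} [Fintype n₁] [Fintype n₂]
    [NonUnitalNonAssocSemiring R] (A : Matrix m n₁ R) (B : Matrix m n₂ R) (a b : m) :
    fromCols A B a ⬝ᵥ fromCols A B b = A a ⬝ᵥ A b + B a ⬝ᵥ B b :=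
  sumElim_dotProduct_sumElim _ _ _ _

section ScaledIdentityBlock

variable {m r : ℕ} {B : Matrix (Fin m) (Fin (m - r)) ℝ} {Λd : ℕ → ℝ} {ρ : ℝ}

theorem row_eq_zero_of_lt (hB0 : ∀ i : Fin m, (i : ℕ) < r → ∀ c, B i c = 0)
    {i : Fin m} (hi : (i : ℕ) < r) : B i = 0 :=
  funext (hB0 i hi)

theorem row_eq_single_of_le (hB1 : ∀ i : Fin m, r ≤ (i : ℕ) → ∀ c : Fin (m - r),
      B i c = if (c : ℕ) = (i : ℕ) - r then -ρ * (Λd ((i : ℕ) - r))⁻¹ else 0)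
    {i : Fin m} (hi : r ≤ (i : ℕ)) :
    B i = Pi.single ⟨(i : ℕ) - r, by omega⟩ (-ρ * (Λd ((i : ℕ) - r))⁻¹) := by
  funext c
  simp only [hB1 i hi c, Pi.single_apply, Fin.ext_iff]

theorem row_dotProduct_row_self_of_le (hB1 : ∀ i : Fin m, r ≤ (i : ℕ) → ∀ c : Fin (m - r),
      B i c = if (c : ℕ) = (i : ℕ) - r then -ρ * (Λd ((i : ℕ) - r))⁻¹ else 0)
    {i : Fin m} (hi : r ≤ (i : ℕ)) :
    B i ⬝ᵥ B i = ρ ^ 2 * ((Λd ((i : ℕ) - r))⁻¹) ^ 2 := by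
  rw [row_eq_single_of_le hB1 hi, single_dotProduct, Pi.single_eq_same]
  ring

theorem row_dotProduct_row_of_ne (hB0 : ∀ i : Fin m, (i : ℕ) < r → ∀ c, B i c = 0)
    (hB1 : ∀ i : Fin m, r ≤ (i : ℕ) → ∀ c : Fin (m - r),
      B i c = if (c : ℕ) = (i : ℕ) - r then -ρ * (Λd ((i : ℕ) - r))⁻¹ else 0)
    {a b : Fin m} (hab : a ≠ b) : B a ⬝ᵥ B b = 0 := by
  rcases lt_or_ge (a : ℕ) r with ha | ha
  · rw [row_eq_zero_of_lt hB0 ha, zero_dotProduct]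
  rcases lt_or_ge (b : ℕ) r with hb | hb
  · rw [row_eq_zero_of_lt hB0 hb, dotProduct_zero]
  have hne : (a : ℕ) - r ≠ (b : ℕ) - r := fun h => hab (Fin.ext (by omega))
  rw [row_eq_single_of_le hB1 ha, row_eq_single_of_le hB1 hb, single_dotProduct,
    Pi.single_eq_of_ne (by simpa [Fin.ext_iff] using hne), mul_zero]

end ScaledIdentityBlock

theorem stmt10_general {m n r : ℕ}
    (A : Matrix (Fin m) (Fin n) ℝ) (B : Matrix (Fin m) (Fin (m - r)) ℝ)
    (Λd : ℕ → ℝ) (ρ : ℝ)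
    (hB0 : ∀ i : Fin m, (i : ℕ) < r → ∀ c, B i c = 0)
    (hB1 : ∀ i : Fin m, r ≤ (i : ℕ) → ∀ c : Fin (m - r),
      B i c = if (c : ℕ) = (i : ℕ) - r then -ρ * (Λd ((i : ℕ) - r))⁻¹ else 0)
    (M : Matrix (Fin m) (Fin n ⊕ Fin (m - r)) ℝ) (hM : M = Matrix.fromCols A B)
    (W : Finset (Fin m)) (i : Fin m) (hiW : i ∉ W)
    (L D : Matrix {j // j ∈ W} {j // j ∈ W} ℝ)
    (l : {j // j ∈ W} → ℝ)
    (hl : (L * D) *ᵥ l = fun a : {j // j ∈ W} => M a.val ⬝ᵥ M i)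
    (δ : ℝ) (hδ : δ = M i ⬝ᵥ M i - ∑ a, l a * D a a * l a) :
    ((L * D) *ᵥ l = fun a : {j // j ∈ W} => A a.val ⬝ᵥ A i) ∧
    (r ≤ (i : ℕ) →
      δ = A i ⬝ᵥ A i - (∑ a, l a * D a a * l a)
          + ρ ^ 2 * ((Λd ((i : ℕ) - r))⁻¹) ^ 2) ∧
    ((i : ℕ) < r → δ = A i ⬝ᵥ A i - ∑ a, l a * D a a * l a) := by
  subst hM
  refine ⟨?_, fun hi => ?_, fun hi => ?_⟩
  · rw [hl]
    funext a
    rw [fromCols_row_dotProduct,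
      row_dotProduct_row_of_ne hB0 hB1 (ne_of_mem_of_not_mem a.2 hiW), add_zero]
  · rw [hδ, fromCols_row_dotProduct, row_dotProduct_row_self_of_le hB1 hi]
    ring
  · rw [hδ, fromCols_row_dotProduct, row_eq_zero_of_lt hB0 hi, zero_dotProduct, add_zero]

/-- LDLᵀ update using only `A`.  With `M = [A B]`, `B` having
first `r` rows zero and remaining rows `-ρΛ⁻¹` (`Λ` invertible diagonal with
entries `Λd`, `ρ > 0`), `W` a working set with `i ∉ W`, and `L` (unit lower
triangular), `D` (diagonal, nonsingular) satisfying `[M]_W [M]_Wᵀ = L D Lᵀ`,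
suppose `l` and `δ` are the standard update quantities `L D l = [M]_W [M]_iᵀ`,
`δ = [M]_i [M]_iᵀ − lᵀ D l`.  Then `L D l = [A]_W [A]_iᵀ`, and
`δ = [A]_i [A]_iᵀ − lᵀ D l + ρ²(Λ⁻²)_{kk}` if `r ≤ i` (with `k = i − r`),
while `δ = [A]_i [A]_iᵀ − lᵀ D l` if `i < r`. -/
theorem stmt10 {m n r : ℕ} (hr : r ≤ m)
    (A : Matrix (Fin m) (Fin n) ℝ) (B : Matrix (Fin m) (Fin (m - r)) ℝ)
    (Λd : ℕ → ℝ) (hΛd : ∀ j, Λd j ≠ 0) (ρ : ℝ) (hρ : 0 < ρ)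
    (hB0 : ∀ i : Fin m, (i : ℕ) < r → ∀ c, B i c = 0)
    (hB1 : ∀ i : Fin m, r ≤ (i : ℕ) → ∀ c : Fin (m - r),
      B i c = if (c : ℕ) = (i : ℕ) - r then -ρ * (Λd ((i : ℕ) - r))⁻¹ else 0)
    (M : Matrix (Fin m) (Fin n ⊕ Fin (m - r)) ℝ) (hM : M = Matrix.fromCols A B)
    (W : Finset (Fin m)) (i : Fin m) (hiW : i ∉ W)
    (L D : Matrix {j // j ∈ W} {j // j ∈ W} ℝ)
    (hLlow : ∀ a b : {j // j ∈ W}, a < b → L a b = 0) (hLdiag : ∀ a, L a a = 1)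
    (hDdiag : ∀ a b : {j // j ∈ W}, a ≠ b → D a b = 0) (hDnz : ∀ a, D a a ≠ 0)
    (hfact : ∀ a b : {j // j ∈ W}, M a.val ⬝ᵥ M b.val = (L * D * Lᵀ) a b)
    (l : {j // j ∈ W} → ℝ)
    (hl : (L * D) *ᵥ l = fun a : {j // j ∈ W} => M a.val ⬝ᵥ M i)
    (δ : ℝ) (hδ : δ = M i ⬝ᵥ M i - ∑ a, l a * D a a * l a) :
    ((L * D) *ᵥ l = fun a : {j // j ∈ W} => A a.val ⬝ᵥ A i) ∧
    (r ≤ (i : ℕ) →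
      δ = A i ⬝ᵥ A i - (∑ a, l a * D a a * l a)
          + ρ ^ 2 * ((Λd ((i : ℕ) - r))⁻¹) ^ 2) ∧
    ((i : ℕ) < r → δ = A i ⬝ᵥ A i - ∑ a, l a * D a a * l a) :=
  stmt10_general A B Λd ρ hB0 hB1 M hM W i hiW L D l hl δ hδ
end

section
/- Prioritized intersection is order-dependent: there exist three closed convex sets Z₁, Z₂, Z₃ ⊆ ℝ² (e.g., polygons) with pairwise nonempty intersections but empty triple intersection such that the prioritized intersections computed under the orderings (1,2,3), (2,3,1), and (3,1,2) yield three distinct points/sets. -/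
open Matrix

/-- The sequentially-optimal (minimum-norm) slacks for the prioritized
intersection of an ordered family of polyhedra `Zᵢ = {z : Aᵢ z ≤ bᵢ}`:
the highest-priority slack is zero, each level is feasible with its slack
given the fixed slacks of all higher-priority levels, and each slack is of
minimum Euclidean norm among all feasible slacks for its level. -/
def PrioSlacks {p N n : ℕ} (A : Fin p → Matrix (Fin N) (Fin n) ℝ)
    (b : Fin p → Fin N → ℝ) (ε : Fin p → Fin N → ℝ) : Prop :=
  (∀ i : Fin p, (i : ℕ) = 0 → ε i = 0) ∧
  (∀ i : Fin p, ∃ z : Fin n → ℝ,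
      (∀ j, j < i → A j *ᵥ z ≤ b j + ε j) ∧ A i *ᵥ z ≤ b i + ε i) ∧
  (∀ i : Fin p, ∀ e : Fin N → ℝ,
      (∃ z : Fin n → ℝ, (∀ j, j < i → A j *ᵥ z ≤ b j + ε j) ∧
        A i *ᵥ z ≤ b i + e) →
      ∑ k, (ε i k) ^ 2 ≤ ∑ k, (e k) ^ 2)

/-- The three half-planes `x ≤ -1`, `-x + y ≤ -1`, `-x - y ≤ -1`. -/
noncomputable def Am : Fin 3 → Matrix (Fin 1) (Fin 2) ℝ :=
  ![!![(1:ℝ),0], !![-1,1], !![-1,-1]]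

noncomputable def bm : Fin 3 → Fin 1 → ℝ := fun _ _ => (-1:ℝ)

noncomputable def e1 : Fin 3 → Fin 1 → ℝ := ![0, 0, fun _ => 4]
noncomputable def e2 : Fin 3 → Fin 1 → ℝ := ![0, 0, fun _ => 2]
noncomputable def e3 : Fin 3 → Fin 1 → ℝ := ![0, 0, fun _ => 4]

lemma mem1 : ∀ j, Am j *ᵥ ![-1,-2] ≤ bm j + e1 j := by
  intro j; fin_cases j <;>
    (intro k; fin_cases k; simp [Am, bm, e1, Matrix.mulVec, dotProduct,
      Fin.sum_univ_two]; all_goals norm_num)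

lemma mem2 : ∀ j, (Am ∘ ![1,2,0]) j *ᵥ ![1,0] ≤ (bm ∘ ![1,2,0]) j + e2 j := by
  intro j; fin_cases j <;>
    (intro k; fin_cases k; simp [Am, bm, e2, Matrix.mulVec, dotProduct,
      Fin.sum_univ_two]; all_goals norm_num)

lemma mem3 : ∀ j, (Am ∘ ![2,0,1]) j *ᵥ ![-1,2] ≤ (bm ∘ ![2,0,1]) j + e3 j := by
  intro j; fin_cases j <;>
    (intro k; fin_cases k; simp [Am, bm, e3, Matrix.mulVec, dotProduct,
      Fin.sum_univ_two]; all_goals norm_num)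

lemma prio1 : PrioSlacks Am bm e1 := by
  refine ⟨?_, ?_, ?_⟩
  · intro i hi; fin_cases i <;> simp_all [e1]
  · exact fun i => ⟨![-1,-2], fun j _ => mem1 j, mem1 i⟩
  · rintro i e ⟨z, hz, hi⟩
    fin_cases i
    · simp [e1, Fin.sum_univ_one]; positivity
    · simp [e1, Fin.sum_univ_one]; positivity
    · have h0 := hz 0 (by decide) 0
      have h1 := hz 1 (by decide) 0
      have h2 := hi 0
      simp [Am, bm, e1, Matrix.mulVec, dotProduct, Fin.sum_univ_two,
        Fin.sum_univ_one] at h0 h1 h2 ⊢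
      nlinarith [h0, h1, h2]

lemma prio2 : PrioSlacks (Am ∘ ![1, 2, 0]) (bm ∘ ![1, 2, 0]) e2 := by
  refine ⟨?_, ?_, ?_⟩
  · intro i hi; fin_cases i <;> simp_all [e2]
  · exact fun i => ⟨![1,0], fun j _ => mem2 j, mem2 i⟩
  · rintro i e ⟨z, hz, hi⟩
    fin_cases i
    · simp [e2, Fin.sum_univ_one]; positivity
    · simp [e2, Fin.sum_univ_one]; positivity
    · have h0 := hz 0 (by decide) 0
      have h1 := hz 1 (by decide) 0
      have h2 := hi 0
      simp [Am, bm, e2, Matrix.mulVec, dotProduct, Fin.sum_univ_two,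
        Fin.sum_univ_one] at h0 h1 h2 ⊢
      nlinarith [h0, h1, h2]

lemma prio3 : PrioSlacks (Am ∘ ![2, 0, 1]) (bm ∘ ![2, 0, 1]) e3 := by
  refine ⟨?_, ?_, ?_⟩
  · intro i hi; fin_cases i <;> simp_all [e3]
  · exact fun i => ⟨![-1,2], fun j _ => mem3 j, mem3 i⟩
  · rintro i e ⟨z, hz, hi⟩
    fin_cases i
    · simp [e3, Fin.sum_univ_one]; positivity
    · simp [e3, Fin.sum_univ_one]; positivity
    · have h0 := hz 0 (by decide) 0
      have h1 := hz 1 (by decide) 0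
      have h2 := hi 0
      simp [Am, bm, e3, Matrix.mulVec, dotProduct, Fin.sum_univ_two,
        Fin.sum_univ_one] at h0 h1 h2 ⊢
      nlinarith [h0, h1, h2]

/-- The prioritized intersection is order-dependent: there exist
three closed convex sets (polyhedra) `Z₁, Z₂, Z₃ ⊆ ℝ²` with pairwise nonempty
intersections but empty triple intersection such that the prioritized
intersections computed under the orderings `(1,2,3)`, `(2,3,1)` and `(3,1,2)`
are three pairwise distinct sets. -/
theorem stmt13 :
    ∃ (N : ℕ) (A : Fin 3 → Matrix (Fin N) (Fin 2) ℝ) (b : Fin 3 → Fin N → ℝ),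
      (∀ i j : Fin 3, i ≠ j → ∃ z : Fin 2 → ℝ, A i *ᵥ z ≤ b i ∧ A j *ᵥ z ≤ b j) ∧
      (¬ ∃ z : Fin 2 → ℝ, ∀ i, A i *ᵥ z ≤ b i) ∧
      ∃ ε₁ ε₂ ε₃ : Fin 3 → Fin N → ℝ,
        PrioSlacks A b ε₁ ∧
        PrioSlacks (A ∘ ![1, 2, 0]) (b ∘ ![1, 2, 0]) ε₂ ∧
        PrioSlacks (A ∘ ![2, 0, 1]) (b ∘ ![2, 0, 1]) ε₃ ∧
        letI S₁ : Set (Fin 2 → ℝ) := {z | ∀ i, A i *ᵥ z ≤ b i + ε₁ i}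
        letI S₂ : Set (Fin 2 → ℝ) :=
          {z | ∀ i, (A ∘ ![1, 2, 0]) i *ᵥ z ≤ (b ∘ ![1, 2, 0]) i + ε₂ i}
        letI S₃ : Set (Fin 2 → ℝ) :=
          {z | ∀ i, (A ∘ ![2, 0, 1]) i *ᵥ z ≤ (b ∘ ![2, 0, 1]) i + ε₃ i}
        S₁ ≠ S₂ ∧ S₂ ≠ S₃ ∧ S₁ ≠ S₃ := by
  have hsub : ∀ i j : Fin 3, i ≠ j →
      ∃ z : Fin 2 → ℝ, Am i *ᵥ z ≤ bm i ∧ Am j *ᵥ z ≤ bm j := by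
    have p01 : Am 0 *ᵥ ![-1,-2] ≤ bm 0 ∧ Am 1 *ᵥ ![-1,-2] ≤ bm 1 := by
      constructor <;> intro k <;> fin_cases k <;>
        simp [Am, bm, Matrix.mulVec, dotProduct, Fin.sum_univ_two] <;> norm_num
    have p02 : Am 0 *ᵥ ![-1,2] ≤ bm 0 ∧ Am 2 *ᵥ ![-1,2] ≤ bm 2 := by
      constructor <;> intro k <;> fin_cases k <;>
        simp [Am, bm, Matrix.mulVec, dotProduct, Fin.sum_univ_two] <;> norm_num
    have p12 : Am 1 *ᵥ ![1,0] ≤ bm 1 ∧ Am 2 *ᵥ ![1,0] ≤ bm 2 := by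
      constructor <;> intro k <;> fin_cases k <;>
        simp [Am, bm, Matrix.mulVec, dotProduct, Fin.sum_univ_two] <;> norm_num
    intro i j hij
    fin_cases i <;> fin_cases j
    · exact absurd rfl hij
    · exact ⟨![-1,-2], p01.1, p01.2⟩
    · exact ⟨![-1,2], p02.1, p02.2⟩
    · exact ⟨![-1,-2], p01.2, p01.1⟩
    · exact absurd rfl hij
    · exact ⟨![1,0], p12.1, p12.2⟩
    · exact ⟨![-1,2], p02.2, p02.1⟩
    · exact ⟨![1,0], p12.2, p12.1⟩
    · exact absurd rfl hij
  refine ⟨1, Am, bm, hsub, ?_, e1, e2, e3, prio1, prio2, prio3, ?_, ?_, ?_⟩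
  · rintro ⟨z, hz⟩
    have h0 := hz 0 0
    have h1 := hz 1 0
    have h2 := hz 2 0
    simp [Am, bm, Matrix.mulVec, dotProduct, Fin.sum_univ_two] at h0 h1 h2
    linarith
  · intro h
    have hm : (![(-1:ℝ),-2]) ∈ {z : Fin 2 → ℝ | ∀ i, Am i *ᵥ z ≤ bm i + e1 i} :=
      fun i => mem1 i
    rw [h] at hm
    have := hm 1 0
    simp [Am, bm, e2, Matrix.mulVec, dotProduct, Fin.sum_univ_two] at this
    linarith
  · intro h
    have hm : (![(1:ℝ),0]) ∈
        {z : Fin 2 → ℝ | ∀ i, (Am ∘ ![1,2,0]) i *ᵥ z ≤ (bm ∘ ![1,2,0]) i + e2 i} :=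
      fun i => mem2 i
    rw [h] at hm
    have := hm 1 0
    simp [Am, bm, e3, Matrix.mulVec, dotProduct, Fin.sum_univ_two] at this
    linarith
  · intro h
    have hm : (![(-1:ℝ),-2]) ∈ {z : Fin 2 → ℝ | ∀ i, Am i *ᵥ z ≤ bm i + e1 i} :=
      fun i => mem1 i
    rw [h] at hm
    have := hm 0 0
    simp [Am, bm, e3, Matrix.mulVec, dotProduct, Fin.sum_univ_two] at this
    linarith
end
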